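/- If g₁ = g₂^M for M ∈ SL(2,K) then the bicovariant B_{g₁,g₂} = g₂(X₂,Y₂)G₁(X₁,Y₁) − G₂(X₂,Y₂)g₁(X₁,Y₁) equals the transform of B_{g₂,g₂} by (M, I) in the first pair of variables, and hence is divisible by L_M = −sX₁X₂+rX₁Y₂−uY₁X₂+tY₁Y₂. -/
import Mathlib


/-- Discriminant of the binary cubic `aX³+bX²Y+cXY²+dY³`. -/
def cubicDisc {K : Type*} [CommRing K] (a b c d : K) : K :=
  b^2*c^2 - 4*a*c^3 - 4*b^3*d - 27*a^2*d^2 + 18*a*b*c*d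

/-- Coefficient of `X³` in `g(rX+tY, sX+uY)`. -/
def tA {K : Type*} [CommRing K] (a b c d r s t u : K) : K :=
  a*r^3 + b*r^2*s + c*r*s^2 + d*s^3

/-- Coefficient of `X²Y` in `g(rX+tY, sX+uY)`. -/
def tB {K : Type*} [CommRing K] (a b c d r s t u : K) : K :=
  3*a*r^2*t + b*(r^2*u + 2*r*s*t) + c*(2*r*s*u + s^2*t) + 3*d*s^2*u

/-- Coefficient of `XY²` in `g(rX+tY, sX+uY)`. -/
def tC {K : Type*} [CommRing K] (a b c d r s t u : K) : K :=
  3*a*r*t^2 + b*(2*r*t*u + s*t^2) + c*(r*u^2 + 2*s*t*u) + 3*d*s*u^2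

/-- Coefficient of `Y³` in `g(rX+tY, sX+uY)`. -/
def tD {K : Type*} [CommRing K] (a b c d r s t u : K) : K :=
  a*t^3 + b*t^2*u + c*t*u^2 + d*u^3

open MvPolynomial in
/-- The binary cubic with coefficients `a,b,c,d` evaluated at a pair of
polynomial variables. -/
noncomputable def bcF {K : Type*} [CommRing K] (a b c d : K)
    (x y : MvPolynomial (Fin 4) K) : MvPolynomial (Fin 4) K :=
  C a * x^3 + C b * x^2*y + C c * x*y^2 + C d * y^3

open MvPolynomial in
/-- The cubic covariant `G` of the binary cubic with coefficients `a,b,c,d`,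
evaluated at a pair of polynomial variables. -/
noncomputable def bcG {K : Type*} [CommRing K] (a b c d : K)
    (x y : MvPolynomial (Fin 4) K) : MvPolynomial (Fin 4) K :=
  C (2*b^3 + 27*a^2*d - 9*a*b*c) * x^3 + C (3*(b^2*c + 9*a*b*d - 6*a*c^2)) * x^2*y
    - C (3*(b*c^2 + 9*a*c*d - 6*b^2*d)) * x*y^2 - C (2*c^3 + 27*a*d^2 - 9*b*c*d) * y^3

open MvPolynomial in
/-- The bicubic bicovariant
`B = g₂(X₂,Y₂)G₁(X₁,Y₁) − G₂(X₂,Y₂)g₁(X₁,Y₁)` in `K[X₁,Y₁,X₂,Y₂]`,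
with variables `X₁,Y₁,X₂,Y₂` indexed `0,1,2,3`. -/
noncomputable def bicov {K : Type*} [CommRing K] (a₁ b₁ c₁ d₁ a₂ b₂ c₂ d₂ : K) :
    MvPolynomial (Fin 4) K :=
  bcF a₂ b₂ c₂ d₂ (X 2) (X 3) * bcG a₁ b₁ c₁ d₁ (X 0) (X 1)
    - bcG a₂ b₂ c₂ d₂ (X 2) (X 3) * bcF a₁ b₁ c₁ d₁ (X 0) (X 1)

open MvPolynomial in
/-- The bilinear form `L_M = −sX₁X₂ + rX₁Y₂ − uY₁X₂ + tY₁Y₂` attached to the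
matrix `M = [[r,s],[t,u]]`. -/
noncomputable def LM {K : Type*} [CommRing K] (r s t u : K) : MvPolynomial (Fin 4) K :=
  C (-s) * X 0 * X 2 + C r * X 0 * X 3 + C (-u) * X 1 * X 2 + C t * X 1 * X 3


open MvPolynomial in
/-- Cofactor `Q` with `B_{g,g} = (X₀X₃ - X₁X₂)·Q`. -/
noncomputable def bQ {K : Type*} [CommRing K] (a b c d : K) : MvPolynomial (Fin 4) K :=
  C (2*b^4 - 12*a*b^2*c + 18*a^2*c^2) * (X 0^2*X 2^2)
  + C (2*b^3*c - 6*a*b*c^2 - 18*a*b^2*d + 54*a^2*c*d) * (X 0^2*X 2*X 3 + X 0*X 1*X 2^2)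
  + C (2*b^3*d + 2*a*c^3 - 18*a*b*c*d + 54*a^2*d^2) * (X 0^2*X 3^2 + X 1^2*X 2^2)
  + C (6*b^2*c^2 - 16*b^3*d - 16*a*c^3 + 36*a*b*c*d + 54*a^2*d^2) * (X 0*X 1*X 2*X 3)
  + C (2*b*c^3 - 6*b^2*c*d - 18*a*c^2*d + 54*a*b*d^2) * (X 0*X 1*X 3^2 + X 1^2*X 2*X 3)
  + C (2*c^4 - 12*b*c^2*d + 18*b^2*d^2) * (X 1^2*X 3^2)

open MvPolynomial in
lemma bicov_self_factor {K : Type*} [CommRing K] (a b c d : K) :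
    bicov a b c d a b c d = (X 0 * X 3 - X 1 * X 2) * bQ a b c d := by
  unfold bicov bcF bcG bQ
  simp only [C_add, C_sub, C_mul, C_pow, map_ofNat]
  ring

open MvPolynomial in
lemma bcF_transform {K : Type*} [CommRing K] (a b c d r s t u : K) :
    bcF (tA a b c d r s t u) (tB a b c d r s t u) (tC a b c d r s t u)
      (tD a b c d r s t u) (X 0) (X 1)
    = bcF a b c d (C r * X 0 + C t * X 1) (C s * X 0 + C u * X 1) := by
  unfold bcF tA tB tC tD
  simp only [C_add, C_sub, C_mul, C_pow, map_ofNat]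
  ring

open MvPolynomial in
lemma bcG_transform {K : Type*} [CommRing K] (a b c d r s t u : K) :
    bcG (tA a b c d r s t u) (tB a b c d r s t u) (tC a b c d r s t u)
      (tD a b c d r s t u) (X 0) (X 1)
    = C (r*u - s*t)^3 * bcG a b c d (C r * X 0 + C t * X 1) (C s * X 0 + C u * X 1) := by
  unfold bcG tA tB tC tD
  simp only [C_add, C_sub, C_mul, C_pow, map_ofNat]
  ring

open MvPolynomial in
lemma bind₁_bcF {K : Type*} [CommRing K] (a b c d : K) (f : Fin 4 → MvPolynomial (Fin 4) K)
    (x y : MvPolynomial (Fin 4) K) :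
    bind₁ f (bcF a b c d x y) = bcF a b c d (bind₁ f x) (bind₁ f y) := by
  simp only [bcF, map_add, map_mul, map_pow, bind₁_C_right]

open MvPolynomial in
lemma bind₁_bcG {K : Type*} [CommRing K] (a b c d : K) (f : Fin 4 → MvPolynomial (Fin 4) K)
    (x y : MvPolynomial (Fin 4) K) :
    bind₁ f (bcG a b c d x y) = bcG a b c d (bind₁ f x) (bind₁ f y) := by
  simp only [bcG, map_add, map_sub, map_mul, map_pow, bind₁_C_right]

open MvPolynomial in
/-- If `g₁ = g₂^M` for `M = [[r,s],[t,u]] ∈ SL(2,K)` (untwisted action,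
`g^M(X,Y) = g(rX+tY, sX+uY)`), then `B_{g₁,g₂}` equals the transform of
`B_{g₂,g₂}` by `(M, I)` in the first pair of variables (substituting
`X₁ ↦ rX₁+tY₁`, `Y₁ ↦ sX₁+uY₁`), and hence `L_M` divides `B_{g₁,g₂}`. -/
theorem bicov_transform_and_dvd {K : Type*} [Field K]
    (h2 : (2:K) ≠ 0) (h3 : (3:K) ≠ 0)
    (a₁ b₁ c₁ d₁ a₂ b₂ c₂ d₂ r s t u : K)
    (hΔ : cubicDisc a₂ b₂ c₂ d₂ ≠ 0)
    (hdet : r*u - s*t = 1)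
    (ha : a₁ = tA a₂ b₂ c₂ d₂ r s t u)
    (hb : b₁ = tB a₂ b₂ c₂ d₂ r s t u)
    (hc : c₁ = tC a₂ b₂ c₂ d₂ r s t u)
    (hd : d₁ = tD a₂ b₂ c₂ d₂ r s t u) :
    bicov a₁ b₁ c₁ d₁ a₂ b₂ c₂ d₂
      = bind₁ (![C r * X 0 + C t * X 1, C s * X 0 + C u * X 1, X 2, X 3])
          (bicov a₂ b₂ c₂ d₂ a₂ b₂ c₂ d₂)
    ∧ LM r s t u ∣ bicov a₁ b₁ c₁ d₁ a₂ b₂ c₂ d₂ := by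
  subst ha hb hc hd
  set f : Fin 4 → MvPolynomial (Fin 4) K :=
    ![C r * X 0 + C t * X 1, C s * X 0 + C u * X 1, X 2, X 3] with hf
  have hf0 : f 0 = C r * X 0 + C t * X 1 := rfl
  have hf1 : f 1 = C s * X 0 + C u * X 1 := rfl
  have hf2 : f 2 = (X 2 : MvPolynomial (Fin 4) K) := rfl
  have hf3 : f 3 = (X 3 : MvPolynomial (Fin 4) K) := rfl
  have h1 : bicov (tA a₂ b₂ c₂ d₂ r s t u) (tB a₂ b₂ c₂ d₂ r s t u)
      (tC a₂ b₂ c₂ d₂ r s t u) (tD a₂ b₂ c₂ d₂ r s t u) a₂ b₂ c₂ d₂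
      = bind₁ f (bicov a₂ b₂ c₂ d₂ a₂ b₂ c₂ d₂) := by
    unfold bicov
    rw [map_sub, map_mul, map_mul, bind₁_bcF, bind₁_bcF, bind₁_bcG, bind₁_bcG,
      bind₁_X_right, bind₁_X_right, bind₁_X_right, bind₁_X_right,
      hf0, hf1, hf2, hf3, bcF_transform a₂ b₂ c₂ d₂ r s t u,
      bcG_transform a₂ b₂ c₂ d₂ r s t u, hdet, C_1, one_pow, one_mul]
  refine ⟨h1, ?_⟩
  refine ⟨bind₁ f (bQ a₂ b₂ c₂ d₂), ?_⟩
  rw [h1, bicov_self_factor, map_mul]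
  congr 1
  rw [map_sub, map_mul, map_mul, bind₁_X_right, bind₁_X_right, bind₁_X_right,
    bind₁_X_right, hf0, hf1, hf2, hf3]
  unfold LM
  simp only [C_neg]
  ring
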